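/- Fix μ > 0, and let z_μ have density (2K_0(μ))^{-1} e^{-μ cosh y} on ℝ. Then for every λ ≥ 0, E[ exp(−λ e^{z_μ} − (λ²/(2μ)) e^{z_μ}) ] = K_0(μ + λ) / K_0(μ). -/

import Mathlib

open MeasureTheory Real Set

/-- The Macdonald function of order zero, via its integral representation. -/
noncomputable def K0 (a : ℝ) : ℝ := (1 / 2) * ∫ x : ℝ, Real.exp (-a * Real.cosh x)

lemma abs_le_cosh' (x : ℝ) : |x| ≤ Real.cosh x := by
  rw [← Real.cosh_abs]
  exact le_trans (Real.self_le_sinh_iff.2 (abs_nonneg x)) (Real.sinh_lt_cosh _).le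

lemma integrable_exp_neg_abs' {a : ℝ} (ha : 0 < a) :
    Integrable (fun x : ℝ => Real.exp (-a * |x|)) := by
  have h2 : IntegrableOn (fun x : ℝ => Real.exp (-a * |x|)) (Ioi 0) := by
    refine (exp_neg_integrableOn_Ioi 0 ha).congr_fun (fun x hx => ?_) measurableSet_Ioi
    rw [abs_of_pos hx]
  have h3 : IntegrableOn (fun x : ℝ => Real.exp (-a * |x|)) (Iic 0) := by
    rw [← Measure.map_neg_eq_self (volume : Measure ℝ)]
    have m : MeasurableEmbedding fun x : ℝ => -x := (Homeomorph.neg ℝ).measurableEmbedding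
    rw [m.integrableOn_map_iff]
    simp_rw [Function.comp_def, abs_neg, neg_preimage, neg_Iic, neg_zero]
    exact (integrableOn_Ici_iff_integrableOn_Ioi enorm_ne_top).mpr h2
  have h4 := h3.union h2
  rwa [Iic_union_Ioi, integrableOn_univ] at h4

lemma integrable_exp_neg_cosh' {a : ℝ} (ha : 0 < a) :
    Integrable (fun x : ℝ => Real.exp (-a * Real.cosh x)) := by
  refine (integrable_exp_neg_abs' ha).mono
    ((Real.continuous_exp.comp (continuous_const.mul Real.continuous_cosh)).aestronglyMeasurable)
    (ae_of_all _ fun x => ?_)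
  rw [Real.norm_eq_abs, Real.norm_eq_abs, Real.abs_exp, Real.abs_exp, Real.exp_le_exp]
  have := abs_le_cosh' x
  nlinarith

lemma K0_pos {a : ℝ} (ha : 0 < a) : 0 < K0 a := by
  have h := integrable_exp_neg_cosh' ha
  have h2 : 0 < ∫ x : ℝ, Real.exp (-a * Real.cosh x) := by
    rw [integral_pos_iff_support_of_nonneg_ae (ae_of_all _ fun x => (Real.exp_pos _).le) h]
    have : (Function.support fun x : ℝ => Real.exp (-a * Real.cosh x)) = Set.univ := by
      ext x; simp [Function.support, Real.exp_ne_zero]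
    rw [this]
    simp
  unfold K0
  linarith

lemma integral_exp_neg_AB {A B : ℝ} (hA : 0 < A) (hB : 0 < B) :
    (∫ y : ℝ, Real.exp (-(A * Real.exp (-y) + B * Real.exp y)))
      = ∫ y : ℝ, Real.exp (-(2 * Real.sqrt (A * B)) * Real.cosh y) := by
  have hAB : 0 < A / B := div_pos hA hB
  set t := Real.log (Real.sqrt (A / B)) with ht
  have hst : Real.exp t = Real.sqrt (A / B) := Real.exp_log (Real.sqrt_pos.2 hAB)
  have h1 : A * Real.exp (-t) = Real.sqrt (A * B) := by
    rw [Real.exp_neg, hst, ← Real.sqrt_inv, inv_div]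
    nth_rewrite 1 [← Real.sqrt_sq hA.le]
    rw [← Real.sqrt_mul (sq_nonneg A)]
    congr 1
    field_simp
  have h2 : B * Real.exp t = Real.sqrt (A * B) := by
    rw [hst]
    nth_rewrite 1 [← Real.sqrt_sq hB.le]
    rw [← Real.sqrt_mul (sq_nonneg B)]
    congr 1
    field_simp
  calc (∫ y : ℝ, Real.exp (-(A * Real.exp (-y) + B * Real.exp y)))
      = ∫ y : ℝ, Real.exp (-(A * Real.exp (-(y + t)) + B * Real.exp (y + t))) :=
        (integral_add_right_eq_self (fun y : ℝ =>
          Real.exp (-(A * Real.exp (-y) + B * Real.exp y))) t).symm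
    _ = ∫ y : ℝ, Real.exp (-(2 * Real.sqrt (A * B)) * Real.cosh y) := by
        congr 1 with y
        congr 1
        rw [Real.cosh_eq, show -(y + t) = -y + -t by ring, Real.exp_add, Real.exp_add]
        linear_combination (-Real.exp (-y)) * h1 + (-Real.exp y) * h2

theorem stmt_16 {Ω : Type*} [MeasurableSpace Ω] (P : Measure Ω) [IsProbabilityMeasure P]
    (μ : ℝ) (hμ : 0 < μ) (lam : ℝ) (hlam : 0 ≤ lam) (z : Ω → ℝ) (hz : Measurable z)
    (hlaw : P.map z = volume.withDensity
      (fun y => ENNReal.ofReal ((2 * K0 μ)⁻¹ * Real.exp (-μ * Real.cosh y)))) :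
    ∫ ω, Real.exp (-lam * Real.exp (z ω) - lam ^ 2 / (2 * μ) * Real.exp (z ω)) ∂P
      = K0 (μ + lam) / K0 μ := by
  have hK : 0 < K0 μ := K0_pos hμ
  set g : ℝ → ℝ := fun y => Real.exp (-lam * Real.exp y - lam ^ 2 / (2 * μ) * Real.exp y)
    with hgdef
  have hgc : Continuous g := by
    apply Real.continuous_exp.comp
    fun_prop
  have step1 : (∫ ω, Real.exp (-lam * Real.exp (z ω)
      - lam ^ 2 / (2 * μ) * Real.exp (z ω)) ∂P) = ∫ y, g y ∂(P.map z) :=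
    (integral_map hz.aemeasurable hgc.aestronglyMeasurable).symm
  set d : ℝ → ℝ := fun y => (2 * K0 μ)⁻¹ * Real.exp (-μ * Real.cosh y) with hddef
  have hd : ∀ y : ℝ, 0 ≤ d y := fun y =>
    mul_nonneg (inv_nonneg.2 (by positivity)) (Real.exp_pos _).le
  have hdc : Continuous d :=
    continuous_const.mul (Real.continuous_exp.comp (continuous_const.mul Real.continuous_cosh))
  have hmeas : Measurable (fun y : ℝ => (d y).toNNReal) :=
    hdc.measurable.real_toNNReal
  have step2 : (∫ y, g y ∂(P.map z)) = ∫ y, d y * g y := by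
    rw [hlaw]
    have h0 : (volume.withDensity fun y : ℝ =>
          ENNReal.ofReal ((2 * K0 μ)⁻¹ * Real.exp (-μ * Real.cosh y)))
        = volume.withDensity fun y : ℝ => (((d y).toNNReal : NNReal) : ENNReal) := rfl
    rw [h0, integral_withDensity_eq_integral_smul hmeas]
    congr 1 with y
    rw [NNReal.smul_def, Real.coe_toNNReal _ (hd y), smul_eq_mul]
  set A : ℝ := μ / 2 with hA
  set B : ℝ := (μ + lam) ^ 2 / (2 * μ) with hB
  have hApos : 0 < A := by positivity
  have hBpos : 0 < B := by
    apply div_pos _ (by linarith)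
    have : 0 < μ + lam := by linarith
    positivity
  have step3 : (∫ y, d y * g y)
      = (2 * K0 μ)⁻¹ * ∫ y : ℝ, Real.exp (-(A * Real.exp (-y) + B * Real.exp y)) := by
    rw [← integral_const_mul]
    congr 1 with y
    rw [hddef, hgdef]
    simp only
    rw [mul_assoc, ← Real.exp_add]
    congr 2
    rw [Real.cosh_eq, hA, hB]
    field_simp
    ring
  have hsq : 2 * Real.sqrt (A * B) = μ + lam := by
    have hABval : A * B = ((μ + lam) / 2) ^ 2 := by
      rw [hA, hB]; field_simp
    rw [hABval, Real.sqrt_sq (by linarith)]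
    ring
  rw [step1, step2, step3, integral_exp_neg_AB hApos hBpos, hsq]
  have : (∫ y : ℝ, Real.exp (-(μ + lam) * Real.cosh y)) = 2 * K0 (μ + lam) := by
    unfold K0; ring
  rw [this]
  field_simp
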